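/- arXiv:math/0407191 — 3 statements merged into one kernel-verified Lean document; each statement's English description precedes it below -/
import Mathlib

section
/- For every integer s ≥ 2, the limit as q → 1⁻ (q real, 0 < q < 1) of (1-q)^s · Σ_{k=1}^∞ k^{s-1} q^k/(1-q^k) equals (s-1)! · ζ(s), where ζ is the Riemann zeta function. -/
open Filter Topology Polynomial

lemma norm_lt_one_of_Ioo {q : ℝ} (hq : q ∈ Set.Ioo (0:ℝ) 1) : ‖(q:ℂ)‖ < 1 := by
  rw [Complex.norm_real, Real.norm_eq_abs, abs_of_pos hq.1]; exact hq.2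

lemma summable_pow_add_one {R : Type*} [NormedCommRing R] [CompleteSpace R] [NormOneClass R]
    (i : ℕ) {x : R} (hx : ‖x‖ < 1) :
    Summable (fun k : ℕ => ((k : R) + 1) ^ i * x ^ k) := by
  have h : ∀ k : ℕ, ((k : R) + 1) ^ i * x ^ k
      = ∑ m ∈ Finset.range (i+1), (i.choose m : R) * ((k : R) ^ m * x ^ k) := by
    intro k
    rw [add_pow, Finset.sum_mul]
    refine Finset.sum_congr rfl fun m _ => by ring
  rw [funext h]
  exact summable_sum fun m _ =>
    (summable_pow_mul_geometric_of_norm_lt_one m hx).mul_left _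

lemma summable_poly_mul_geometric (p : ℂ[X]) {x : ℂ} (hx : ‖x‖ < 1) :
    Summable (fun k : ℕ => p.eval ((k:ℂ)+1) * x ^ k) := by
  induction p using Polynomial.induction_on' with
  | add f g hf hg =>
      simp only [eval_add, add_mul]
      exact hf.add hg
  | monomial n a =>
      simp only [eval_monomial]
      have := (summable_pow_add_one n hx).mul_left a
      simpa [mul_assoc] using this

lemma ascPochhammer_eval_add_one (j k : ℕ) :
    (ascPochhammer ℂ j).eval ((k:ℂ)+1) = ((Nat.factorial j * (k + j).choose j : ℕ) : ℂ) := by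
  have h1 : ((k:ℂ)+1) = (((k+1 : ℕ) : ℕ) : ℂ) := by push_cast; ring
  rw [h1, ← ascPochhammer_eval_cast, ascPochhammer_nat_eq_ascFactorial,
    Nat.ascFactorial_eq_factorial_mul_choose]

lemma hasSum_ascPochhammer (j : ℕ) {x : ℂ} (hx : ‖x‖ < 1) :
    HasSum (fun k : ℕ => (ascPochhammer ℂ j).eval ((k:ℂ)+1) * x ^ k)
      ((Nat.factorial j : ℂ) / (1 - x) ^ (j+1)) := by
  have := (hasSum_choose_mul_geometric_of_norm_lt_one j hx).mul_left (Nat.factorial j : ℂ)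
  rw [mul_one_div] at this
  refine this.congr_fun fun k => ?_
  rw [ascPochhammer_eval_add_one]; push_cast; ring

lemma tendsto_coe_Ioo : Tendsto (fun q : ℝ => (q:ℂ)) (𝓝[Set.Ioo (0:ℝ) 1] 1) (𝓝 1) := by
  have := (Complex.continuous_ofReal.tendsto 1).mono_left
    (nhdsWithin_le_nhds (s := Set.Ioo (0:ℝ) 1))
  simpa using this

lemma one_sub_ne {q : ℝ} (hq : q ∈ Set.Ioo (0:ℝ) 1) : (1 : ℂ) - (q:ℂ) ≠ 0 := by
  intro h
  have : (q:ℂ) = 1 := by linear_combination -h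
  rw [Complex.ofReal_eq_one] at this
  exact hq.2.ne this

lemma polyLim : ∀ (j : ℕ) (p : ℂ[X]), p.natDegree ≤ j →
    Tendsto (fun q : ℝ => (1-(q:ℂ))^(j+1) * ∑' k : ℕ, p.eval ((k:ℂ)+1) * (q:ℂ)^k)
      (𝓝[Set.Ioo (0:ℝ) 1] 1) (𝓝 (p.coeff j * Nat.factorial j)) := by
  intro j
  induction j with
  | zero =>
      intro p hp
      rw [Polynomial.eq_C_of_natDegree_le_zero hp]
      simp only [Polynomial.coeff_C_zero, Nat.factorial_zero, Nat.cast_one, mul_one]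
      apply Tendsto.congr' ?_ (tendsto_const_nhds (x := (p.coeff 0 : ℂ)))
      filter_upwards [eventually_mem_nhdsWithin] with q hq
      have hx := norm_lt_one_of_Ioo hq
      simp only [eval_C]
      rw [tsum_mul_left, (hasSum_geometric_of_norm_lt_one hx).tsum_eq,
        pow_one]
      field_simp [one_sub_ne hq]
  | succ j ih =>
      intro p hp
      set c : ℂ := p.coeff (j+1) with hc
      set A : ℂ[X] := ascPochhammer ℂ (j+1) with hA
      have hAdeg : A.natDegree = j + 1 := ascPochhammer_natDegree (S := ℂ) (j+1)
      have hAmonic : A.Monic := monic_ascPochhammer (S := ℂ) (j+1)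
      set r : ℂ[X] := p - C c * A with hr
      have hrdeg : r.natDegree ≤ j := by
        rw [Polynomial.natDegree_le_iff_coeff_eq_zero]
        intro m hm
        rw [hr, Polynomial.coeff_sub, Polynomial.coeff_C_mul]
        rcases eq_or_lt_of_le (Nat.succ_le_of_lt hm) with h | h
        · rw [← h, hc]
          have : A.coeff (j+1) = 1 := by
            have := hAmonic.coeff_natDegree
            rwa [hAdeg] at this
          rw [this, mul_one, sub_self]
        · rw [Polynomial.coeff_eq_zero_of_natDegree_lt (lt_of_le_of_lt hp h),
            Polynomial.coeff_eq_zero_of_natDegree_lt (by rw [hAdeg]; exact h),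
            mul_zero, sub_self]
      have key : ∀ q ∈ Set.Ioo (0:ℝ) 1,
          (1-(q:ℂ))^(j+2) * ∑' k : ℕ, p.eval ((k:ℂ)+1) * (q:ℂ)^k
          = c * Nat.factorial (j+1)
            + (1-(q:ℂ)) * ((1-(q:ℂ))^(j+1) * ∑' k : ℕ, r.eval ((k:ℂ)+1) * (q:ℂ)^k) := by
        intro q hq
        have hx := norm_lt_one_of_Ioo hq
        have h1 : ∀ k : ℕ, p.eval ((k:ℂ)+1) * (q:ℂ)^k
            = c * (A.eval ((k:ℂ)+1) * (q:ℂ)^k) + r.eval ((k:ℂ)+1) * (q:ℂ)^k := by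
          intro k
          rw [hr]
          simp only [Polynomial.eval_sub, Polynomial.eval_mul, Polynomial.eval_C]
          ring
        rw [tsum_congr h1, Summable.tsum_add ((summable_poly_mul_geometric A hx).mul_left c)
            (summable_poly_mul_geometric r hx), tsum_mul_left,
          (hasSum_ascPochhammer (j+1) hx).tsum_eq]
        have hne : ((1:ℂ) - (q:ℂ)) ≠ 0 := one_sub_ne hq
        field_simp
        ring
      have h0 : Tendsto (fun q : ℝ => (1:ℂ)-(q:ℂ)) (𝓝[Set.Ioo (0:ℝ) 1] 1) (𝓝 0) := by
        have := (tendsto_const_nhds (x := (1:ℂ))).sub tendsto_coe_Ioo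
        simpa using this
      have htend : Tendsto (fun q : ℝ => c * (Nat.factorial (j+1) : ℂ)
          + (1-(q:ℂ)) * ((1-(q:ℂ))^(j+1) * ∑' k : ℕ, r.eval ((k:ℂ)+1) * (q:ℂ)^k))
          (𝓝[Set.Ioo (0:ℝ) 1] 1) (𝓝 (p.coeff (j+1) * Nat.factorial (j+1))) := by
        have := (tendsto_const_nhds (x := c * (Nat.factorial (j+1) : ℂ))).add
          (h0.mul (ih r hrdeg))
        simpa using this
      refine Tendsto.congr' ?_ htend
      filter_upwards [eventually_mem_nhdsWithin] with q hq
      exact (key q hq).symm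

lemma keyLim (j : ℕ) :
    Tendsto (fun q : ℝ => (1-(q:ℂ))^(j+1) * ∑' k : ℕ, ((k:ℂ)+1)^j * (q:ℂ)^(k+1))
      (𝓝[Set.Ioo (0:ℝ) 1] 1) (𝓝 (Nat.factorial j : ℂ)) := by
  have hX : Tendsto (fun q : ℝ => (1-(q:ℂ))^(j+1) * ∑' k : ℕ, ((k:ℂ)+1)^j * (q:ℂ)^k)
      (𝓝[Set.Ioo (0:ℝ) 1] 1) (𝓝 (Nat.factorial j : ℂ)) := by
    have := polyLim j (X^j : ℂ[X]) (by simp)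
    simp only [Polynomial.eval_pow, Polynomial.eval_X, Polynomial.coeff_X_pow,
      if_pos rfl, one_mul] at this
    simpa using this
  have := tendsto_coe_Ioo.mul hX
  rw [one_mul] at this
  apply this.congr
  intro q
  have : ∑' k : ℕ, ((k:ℂ)+1)^j * (q:ℂ)^(k+1)
      = (q:ℂ) * ∑' k : ℕ, ((k:ℂ)+1)^j * (q:ℂ)^k := by
    rw [← tsum_mul_left]
    exact tsum_congr fun k => by ring
  rw [this]; ring

lemma powTendsto (n : ℕ) :
    Tendsto (fun q : ℝ => q^(n+1)) (𝓝[Set.Ioo (0:ℝ) 1] 1) (𝓝[Set.Ioo (0:ℝ) 1] 1) := by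
  rw [tendsto_nhdsWithin_iff]
  constructor
  · have := ((continuous_pow (n+1)).tendsto 1).mono_left
      (nhdsWithin_le_nhds (s := Set.Ioo (0:ℝ) 1))
    simpa using this
  · filter_upwards [eventually_mem_nhdsWithin] with q hq
    exact ⟨pow_pos hq.1 _, pow_lt_one₀ hq.1.le hq.2 (Nat.succ_ne_zero n)⟩

lemma one_sub_pow_ne {q : ℝ} (hq : q ∈ Set.Ioo (0:ℝ) 1) (n : ℕ) :
    (1 : ℂ) - (q:ℂ)^(n+1) ≠ 0 := by
  have h : q^(n+1) ∈ Set.Ioo (0:ℝ) 1 :=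
    ⟨pow_pos hq.1 _, pow_lt_one₀ hq.1.le hq.2 (Nat.succ_ne_zero n)⟩
  have := one_sub_ne h
  simpa using this

lemma geomFactor (n : ℕ) :
    Tendsto (fun q : ℝ => (1-(q:ℂ))/(1-(q:ℂ)^(n+1)))
      (𝓝[Set.Ioo (0:ℝ) 1] 1) (𝓝 (1/((n:ℂ)+1))) := by
  have hden : Tendsto (fun q : ℝ => ∑ i ∈ Finset.range (n+1), (q:ℂ)^i)
      (𝓝[Set.Ioo (0:ℝ) 1] 1) (𝓝 ((n:ℂ)+1)) := by
    have hc : Continuous (fun q : ℝ => ∑ i ∈ Finset.range (n+1), (q:ℂ)^i) :=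
      continuous_finset_sum _ fun i _ => Complex.continuous_ofReal.pow i
    have := (hc.tendsto 1).mono_left (nhdsWithin_le_nhds (s := Set.Ioo (0:ℝ) 1))
    simpa [Finset.sum_const] using this
  have hne : ((n:ℂ)+1) ≠ 0 := Nat.cast_add_one_ne_zero n
  have := (tendsto_const_nhds (x := (1:ℂ))).div hden hne
  refine Tendsto.congr' ?_ this
  filter_upwards [eventually_mem_nhdsWithin] with q hq
  have hgs : ((1:ℂ) - (q:ℂ)) * ∑ i ∈ Finset.range (n+1), (q:ℂ)^i = 1 - (q:ℂ)^(n+1) := by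
    have := geom_sum_mul (q:ℂ) (n+1)
    linear_combination -this
  have hs : (∑ i ∈ Finset.range (n+1), (q:ℂ)^i) ≠ 0 := by
    intro h
    rw [h, mul_zero] at hgs
    exact one_sub_pow_ne hq n hgs.symm
  show (1:ℂ)/(∑ i ∈ Finset.range (n+1), (q:ℂ)^i) = (1-(q:ℂ))/(1-(q:ℂ)^(n+1))
  rw [← hgs]
  rw [eq_div_iff (by rw [hgs]; exact one_sub_pow_ne hq n)]
  field_simp

lemma pointLim (s n : ℕ) (hs : 1 ≤ s) :
    Tendsto (fun q : ℝ => (1-(q:ℂ))^s * ∑' k : ℕ, ((k:ℂ)+1)^(s-1) * ((q:ℂ)^(n+1))^(k+1))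
      (𝓝[Set.Ioo (0:ℝ) 1] 1) (𝓝 ((Nat.factorial (s-1) : ℂ)/((n:ℂ)+1)^s)) := by
  obtain ⟨j, rfl⟩ : ∃ j, s = j+1 := ⟨s-1, by omega⟩
  simp only [Nat.add_sub_cancel]
  have h2 := (keyLim j).comp (powTendsto n)
  simp only [Function.comp_def, Complex.ofReal_pow] at h2
  have h1 := (geomFactor n).pow (j+1)
  have hmul := h1.mul h2
  have hval : (1/((n:ℂ)+1))^(j+1) * (Nat.factorial j : ℂ)
      = (Nat.factorial j : ℂ)/((n:ℂ)+1)^(j+1) := by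
    rw [div_pow, one_pow]; ring
  rw [hval] at hmul
  refine Tendsto.congr' ?_ hmul
  filter_upwards [eventually_mem_nhdsWithin] with q hq
  have hy := one_sub_pow_ne hq n
  show ((1-(q:ℂ))/(1-(q:ℂ)^(n+1)))^(j+1) * ((1-(q:ℂ)^(n+1))^(j+1) * _)
      = (1-(q:ℂ))^(j+1) * _
  rw [div_pow]
  field_simp


lemma swapLemma (s : ℕ) {q : ℝ} (hq : q ∈ Set.Ioo (0:ℝ) 1) :
    ∑' k : ℕ, ((k:ℂ)+1)^(s-1) * (q:ℂ)^(k+1)/(1-(q:ℂ)^(k+1))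
      = ∑' n : ℕ, ∑' k : ℕ, ((k:ℂ)+1)^(s-1) * ((q:ℂ)^(n+1))^(k+1) := by
  have hq0 := hq.1
  have hq1 := hq.2
  have hFsum : Summable (Function.uncurry
      fun (n k : ℕ) => ((k:ℂ)+1)^(s-1) * (q:ℂ)^((k+1)*(n+1))) := by
    show Summable (fun p : ℕ × ℕ => ((p.2:ℂ)+1)^(s-1) * (q:ℂ)^((p.2+1)*(p.1+1)))
    apply Summable.of_norm
    have hg : Summable (fun k : ℕ => ((k:ℝ)+1)^(s-1) * q^(k+1)) := by
      have h4 : Summable (fun k : ℕ => ((k:ℝ)+1)^(s-1) * q^k) :=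
        summable_pow_add_one (s-1) (by rw [Real.norm_eq_abs, abs_of_pos hq0]; exact hq1)
      apply (h4.mul_left q).congr
      intro k
      rw [pow_succ]; ring
    have hsum2 : Summable (fun p : ℕ × ℕ => q^(p.1) * (((p.2:ℝ)+1)^(s-1) * q^(p.2+1))) :=
      Summable.mul_of_nonneg (f := fun n : ℕ => q^n)
        (g := fun k : ℕ => ((k:ℝ)+1)^(s-1) * q^(k+1))
        (summable_geometric_of_lt_one hq0.le hq1) hg
        (fun n => by positivity) (fun k => by positivity)
    apply Summable.of_nonneg_of_le (fun _ => norm_nonneg _) ?_ hsum2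
    rintro ⟨n, k⟩
    simp only [norm_mul, norm_pow]
    have h1 : ‖(k:ℂ)+1‖ = (k:ℝ)+1 := by
      rw [show ((k:ℂ)+1) = ((k+1 : ℕ):ℂ) by push_cast; ring, Complex.norm_natCast]
      push_cast; ring
    have h2 : ‖(q:ℂ)‖ = q := by
      rw [Complex.norm_real, Real.norm_eq_abs, abs_of_pos hq0]
    rw [h1, h2]
    have h3 : q^((k+1)*(n+1)) ≤ q^(k+1+n) := by
      apply pow_le_pow_of_le_one hq0.le hq1.le
      nlinarith [Nat.zero_le (k*n)]
    calc ((k:ℝ)+1)^(s-1) * q^((k+1)*(n+1))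
        ≤ ((k:ℝ)+1)^(s-1) * q^(k+1+n) := by
          apply mul_le_mul_of_nonneg_left h3 (by positivity)
      _ = q^n * (((k:ℝ)+1)^(s-1) * q^(k+1)) := by rw [pow_add]; ring
  have hrow : ∀ k : ℕ, HasSum (fun n : ℕ => ((k:ℂ)+1)^(s-1) * (q:ℂ)^((k+1)*(n+1)))
      (((k:ℂ)+1)^(s-1) * (q:ℂ)^(k+1)/(1-(q:ℂ)^(k+1))) := by
    intro k
    have hy : ‖(q:ℂ)^(k+1)‖ < 1 := by
      rw [norm_pow]
      exact pow_lt_one₀ (norm_nonneg _) (norm_lt_one_of_Ioo hq) (Nat.succ_ne_zero k)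
    have hgeo := (hasSum_geometric_of_norm_lt_one hy).mul_left
      (((k:ℂ)+1)^(s-1) * (q:ℂ)^(k+1))
    rw [div_eq_mul_inv]
    apply hgeo.congr_fun
    intro n
    rw [show (k+1)*(n+1) = (k+1) + (k+1)*n by ring, pow_add, pow_mul]
    ring
  calc ∑' k : ℕ, ((k:ℂ)+1)^(s-1) * (q:ℂ)^(k+1)/(1-(q:ℂ)^(k+1))
      = ∑' k : ℕ, ∑' n : ℕ, ((k:ℂ)+1)^(s-1) * (q:ℂ)^((k+1)*(n+1)) :=
        tsum_congr fun k => ((hrow k).tsum_eq).symm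
    _ = ∑' n : ℕ, ∑' k : ℕ, ((k:ℂ)+1)^(s-1) * (q:ℂ)^((k+1)*(n+1)) :=
        (Summable.tsum_comm (f := fun (n k : ℕ) => ((k:ℂ)+1)^(s-1) * (q:ℂ)^((k+1)*(n+1))) hFsum)
    _ = ∑' n : ℕ, ∑' k : ℕ, ((k:ℂ)+1)^(s-1) * ((q:ℂ)^(n+1))^(k+1) := by
        refine tsum_congr fun n => tsum_congr fun k => ?_
        rw [← pow_mul, mul_comm (n+1)]

lemma exp_aux (s : ℕ) {u : ℝ} (hu : 0 < u) :
    Real.exp (-u) * (1+u)^s ≤ 2^s * (1 + Nat.factorial s) := by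
  have h1 : (1+u)^s ≤ 2^s * (1 + u^s) := by
    have hm : 1 + u ≤ 2 * max 1 u := by
      rcases le_total u 1 with h | h
      · rw [max_eq_left h]; linarith
      · rw [max_eq_right h]; linarith
    calc (1+u)^s ≤ (2 * max 1 u)^s := by
          apply pow_le_pow_left₀ (by positivity) hm
      _ = 2^s * (max 1 u)^s := mul_pow 2 _ s
      _ ≤ 2^s * (1 + u^s) := by
          apply mul_le_mul_of_nonneg_left _ (by positivity)
          rcases le_total u 1 with h | h
          · rw [max_eq_left h]; simp only [one_pow]
            have : 0 ≤ u^s := by positivity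
            linarith
          · rw [max_eq_right h]
            have : (0:ℝ) ≤ 1 := zero_le_one
            nlinarith [pow_nonneg hu.le s]
  have h2 : u^s * Real.exp (-u) ≤ Nat.factorial s := by
    have hsum := Real.sum_le_exp_of_nonneg hu.le (s+1)
    have hterm : u^s / Nat.factorial s ≤ Real.exp u := by
      refine le_trans ?_ hsum
      have := Finset.single_le_sum (f := fun i => u^i / Nat.factorial i)
        (fun i _ => by positivity) (Finset.self_mem_range_succ s)
      simpa using this
    rw [div_le_iff₀ (by positivity)] at hterm
    rw [Real.exp_neg]
    calc u^s * (Real.exp u)⁻¹ ≤ (Real.exp u * Nat.factorial s) * (Real.exp u)⁻¹ := by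
          exact mul_le_mul_of_nonneg_right hterm (by positivity)
      _ = Nat.factorial s := by
          field_simp
  calc Real.exp (-u) * (1+u)^s ≤ Real.exp (-u) * (2^s * (1 + u^s)) := by
        apply mul_le_mul_of_nonneg_left h1 (Real.exp_pos _).le
    _ = 2^s * (Real.exp (-u) + u^s * Real.exp (-u)) := by ring
    _ ≤ 2^s * (1 + Nat.factorial s) := by
        apply mul_le_mul_of_nonneg_left _ (by positivity)
        have h3 : Real.exp (-u) ≤ 1 := Real.exp_le_one_iff.mpr (by linarith)
        linarith

lemma boundLemma (s : ℕ) (hs : 1 ≤ s) {q : ℝ} (hq : q ∈ Set.Ioo (0:ℝ) 1) (n : ℕ) :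
    ‖(1-(q:ℂ))^s * ∑' k : ℕ, ((k:ℂ)+1)^(s-1) * ((q:ℂ)^(n+1))^(k+1)‖
      ≤ (Nat.factorial (s-1) * (2^s * (1 + Nat.factorial s))) / ((n:ℝ)+1)^s := by
  have hq0 := hq.1
  have hq1 := hq.2
  set t : ℝ := 1 - q with ht
  have ht0 : 0 < t := by simp [ht]; linarith
  set r : ℝ := q^(n+1) with hr
  have hr0 : 0 < r := pow_pos hq0 _
  have hr1 : r < 1 := pow_lt_one₀ hq0.le hq1 (Nat.succ_ne_zero n)
  set u : ℝ := ((n:ℝ)+1) * t with hu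
  have hu0 : 0 < u := by positivity
  -- norm of prefactor
  have hpre : ‖(1-(q:ℂ))^s‖ = t^s := by
    rw [norm_pow, show (1:ℂ)-(q:ℂ) = ((t:ℝ):ℂ) by rw [ht]; push_cast; ring,
      Complex.norm_real, Real.norm_eq_abs, abs_of_pos ht0]
  -- summability of norms
  have hrnorm : ‖r‖ < 1 := by rw [Real.norm_eq_abs, abs_of_pos hr0]; exact hr1
  have hgsum : Summable (fun k : ℕ => ((k:ℝ)+1)^(s-1) * r^(k+1)) := by
    have h4 : Summable (fun k : ℕ => ((k:ℝ)+1)^(s-1) * r^k) :=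
      summable_pow_add_one (s-1) hrnorm
    apply (h4.mul_left r).congr
    intro k
    rw [pow_succ]; ring
  have hnorm_eq : ∀ k : ℕ, ‖((k:ℂ)+1)^(s-1) * ((q:ℂ)^(n+1))^(k+1)‖
      = ((k:ℝ)+1)^(s-1) * r^(k+1) := by
    intro k
    rw [norm_mul, norm_pow, norm_pow, norm_pow,
      show ((k:ℂ)+1) = ((k+1 : ℕ):ℂ) by push_cast; ring, Complex.norm_natCast,
      Complex.norm_real, Real.norm_eq_abs, abs_of_pos hq0]
    push_cast
    rfl
  -- bound on tsum
  have hT : ‖∑' k : ℕ, ((k:ℂ)+1)^(s-1) * ((q:ℂ)^(n+1))^(k+1)‖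
      ≤ ∑' k : ℕ, ((k:ℝ)+1)^(s-1) * r^(k+1) := by
    refine le_trans (norm_tsum_le_tsum_norm ?_) ?_
    · exact hgsum.congr (fun k => (hnorm_eq k).symm)
    · exact le_of_eq (tsum_congr hnorm_eq)
  -- compare with choose sum
  have hmaj := (hasSum_choose_mul_geometric_of_norm_lt_one (s-1) hrnorm).mul_left
    (r * Nat.factorial (s-1))
  have hSr : ∑' k : ℕ, ((k:ℝ)+1)^(s-1) * r^(k+1)
      ≤ r * Nat.factorial (s-1) * (1 / (1-r)^((s-1)+1)) := by
    rw [← hmaj.tsum_eq]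
    apply Summable.tsum_le_tsum _ hgsum hmaj.summable
    intro k
    have hineq : ((k:ℝ)+1)^(s-1) ≤ (Nat.factorial (s-1) * (k + (s-1)).choose (s-1) : ℕ) := by
      rw [← Nat.ascFactorial_eq_factorial_mul_choose]
      exact_mod_cast Nat.cast_le.mpr
        ((Nat.pow_succ_le_ascFactorial (k+1) (s-1)).trans_eq rfl) |>.trans_eq (by push_cast; ring)
    calc ((k:ℝ)+1)^(s-1) * r^(k+1)
        ≤ (Nat.factorial (s-1) * (k + (s-1)).choose (s-1) : ℕ) * r^(k+1) := by
          exact mul_le_mul_of_nonneg_right hineq (by positivity)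
      _ = r * Nat.factorial (s-1) * (((k + (s-1)).choose (s-1) : ℝ) * r^k) := by
          push_cast
          rw [pow_succ]; ring
  -- exponential bounds
  have hrexp : r ≤ Real.exp (-u) := by
    have h5 : q ≤ Real.exp (-t) := by
      have := Real.add_one_le_exp (q - 1)
      rw [ht, neg_sub]
      linarith
    calc r = q^(n+1) := hr
      _ ≤ (Real.exp (-t))^(n+1) := pow_le_pow_left₀ hq0.le h5 _
      _ = Real.exp (-u) := by
          rw [← Real.exp_nat_mul, hu]
          push_cast
          ring_nf
  have honesub : u / (1+u) ≤ 1 - r := by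
    have h6 := Real.add_one_le_exp u
    have hexp : Real.exp (-u) ≤ 1/(1+u) := by
      rw [Real.exp_neg, one_div]
      exact inv_anti₀ (by linarith) (by linarith)
    have h7 : 1 - 1/(1+u) = u/(1+u) := by field_simp; ring
    linarith
  have h1r : (0:ℝ) < 1 - r := by linarith
  have hs1 : (s-1)+1 = s := by omega
  rw [hs1] at hSr
  have hfrac : (t/(1-r))^s ≤ ((1+u)/((n:ℝ)+1))^s := by
    apply pow_le_pow_left₀ (by positivity)
    rw [div_le_div_iff₀ h1r (by positivity)]
    calc t*((n:ℝ)+1) = (u/(1+u))*(1+u) := by rw [hu]; field_simp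
      _ ≤ (1-r)*(1+u) := mul_le_mul_of_nonneg_right honesub (by positivity)
      _ = (1+u)*(1-r) := mul_comm _ _
  calc ‖(1-(q:ℂ))^s * ∑' k : ℕ, ((k:ℂ)+1)^(s-1) * ((q:ℂ)^(n+1))^(k+1)‖
      = t^s * ‖∑' k : ℕ, ((k:ℂ)+1)^(s-1) * ((q:ℂ)^(n+1))^(k+1)‖ := by
        rw [norm_mul, hpre]
    _ ≤ t^s * (r * Nat.factorial (s-1) * (1 / (1-r)^s)) := by
        apply mul_le_mul_of_nonneg_left (hT.trans hSr) (by positivity)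
    _ = (Nat.factorial (s-1) : ℝ) * r * (t/(1-r))^s := by
        rw [div_pow]
        field_simp
    _ ≤ (Nat.factorial (s-1) : ℝ) * Real.exp (-u) * ((1+u)/((n:ℝ)+1))^s := by
        apply mul_le_mul
        · exact mul_le_mul_of_nonneg_left hrexp (by positivity)
        · exact hfrac
        · positivity
        · positivity
    _ = (Nat.factorial (s-1) : ℝ) * (Real.exp (-u) * (1+u)^s) / ((n:ℝ)+1)^s := by
        rw [div_pow]
        ring
    _ ≤ (Nat.factorial (s-1) * (2^s * (1 + Nat.factorial s))) / ((n:ℝ)+1)^s := by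
        apply (div_le_div_iff_of_pos_right (by positivity)).mpr
        exact mul_le_mul_of_nonneg_left (exp_aux s hu0) (by positivity)

/-- For every integer `s ≥ 2`, the limit as `q → 1⁻` (real `q ∈ (0,1)`) of
`(1-q)^s · Σ_{k=1}^∞ k^{s-1} q^k/(1-q^k)` equals `(s-1)! · ζ(s)`. -/
theorem stmt0 (s : ℕ) (hs : 2 ≤ s) :
    Tendsto (fun q : ℝ =>
        (1 - (q : ℂ)) ^ s *
          ∑' k : ℕ, ((k : ℂ) + 1) ^ (s - 1) * (q : ℂ) ^ (k + 1) / (1 - (q : ℂ) ^ (k + 1)))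
      (𝓝[Set.Ioo (0 : ℝ) 1] 1)
      (𝓝 ((Nat.factorial (s - 1) : ℂ) * riemannZeta s)) := by
  have hs1 : 1 ≤ s := by omega
  -- summable bound
  have h0 : Summable (fun n : ℕ => 1/((n:ℝ)+1)^s) := by
    have h1 := (Real.summable_one_div_nat_pow (p := s)).mpr hs
    have h2 := (summable_nat_add_iff 1).mpr h1
    apply h2.congr
    intro n
    push_cast
    ring
  have hbound_sum : Summable (fun n : ℕ =>
      ((Nat.factorial (s-1) * (2^s * (1 + Nat.factorial s)) : ℝ)) / ((n:ℝ)+1)^s) := by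
    apply (h0.mul_left _).congr
    intro n
    rw [mul_one_div]
  -- dominated convergence
  have hdom := tendsto_tsum_of_dominated_convergence
    (f := fun (q : ℝ) (n : ℕ) =>
      (1-(q:ℂ))^s * ∑' k : ℕ, ((k:ℂ)+1)^(s-1) * ((q:ℂ)^(n+1))^(k+1))
    (g := fun n : ℕ => (Nat.factorial (s-1) : ℂ)/((n:ℂ)+1)^s)
    (bound := fun n : ℕ => ((Nat.factorial (s-1) * (2^s * (1 + Nat.factorial s)) : ℝ)) / ((n:ℝ)+1)^s)
    hbound_sum (fun n => pointLim s n hs1)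
    (by filter_upwards [eventually_mem_nhdsWithin] with q hq n
        exact boundLemma s hs1 hq n)
  -- identify the limit value
  have hzeta : riemannZeta s = ∑' n : ℕ, 1/(n:ℂ)^s := zeta_nat_eq_tsum_of_gt_one (by omega)
  have hsummz : Summable (fun n : ℕ => 1/(n:ℂ)^s) := by
    apply Summable.of_norm
    have : ∀ n : ℕ, ‖1/(n:ℂ)^s‖ = 1/(n:ℝ)^s := by
      intro n
      rw [norm_div, norm_one, norm_pow, Complex.norm_natCast]
    rw [funext this]
    exact (Real.summable_one_div_nat_pow (p := s)).mpr hs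
  have hlim : ∑' n : ℕ, (Nat.factorial (s-1) : ℂ)/((n:ℂ)+1)^s
      = (Nat.factorial (s-1) : ℂ) * riemannZeta s := by
    rw [hzeta, Summable.tsum_eq_zero_add hsummz]
    rw [show ((0:ℕ):ℂ) = 0 by norm_num, zero_pow (by omega : s ≠ 0), div_zero, zero_add,
      ← tsum_mul_left]
    refine tsum_congr fun n => ?_
    push_cast
    rw [mul_one_div]
  rw [← hlim]
  refine Tendsto.congr' ?_ hdom
  filter_upwards [eventually_mem_nhdsWithin] with q hq
  rw [swapLemma s hq, tsum_mul_left]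
end

section
/- For every integer s ≥ 1 and every complex z with |z| < 1, the limit as q → 1⁻ (q real, 0 < q < 1) of (1-q)^s · Σ_{k=1}^∞ q^k z^k/(1-q^k)^s equals the polylogarithm Li_s(z) = Σ_{k=1}^∞ z^k/k^s. -/
open Filter Topology

/-- For every integer `s ≥ 1` and complex `z` with `|z| < 1`, the limit as `q → 1⁻`
(real `q ∈ (0,1)`) of `(1-q)^s · Σ_{k=1}^∞ q^k z^k/(1-q^k)^s` is the polylogarithm
`Li_s(z) = Σ_{k=1}^∞ z^k/k^s`. -/
theorem stmt1 (s : ℕ) (hs : 1 ≤ s) (z : ℂ) (hz : ‖z‖ < 1) :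
    Tendsto (fun q : ℝ =>
        (1 - (q : ℂ)) ^ s *
          ∑' k : ℕ, (q : ℂ) ^ (k + 1) * z ^ (k + 1) / (1 - (q : ℂ) ^ (k + 1)) ^ s)
      (𝓝[Set.Ioo (0 : ℝ) 1] 1)
      (𝓝 (∑' k : ℕ, z ^ (k + 1) / ((k : ℂ) + 1) ^ s)) := by
  simp_rw [← tsum_mul_left]
  -- key algebraic identity on Ioo 0 1
  have halg : ∀ q : ℝ, q ∈ Set.Ioo (0:ℝ) 1 → ∀ k : ℕ,
      (1 - (q:ℂ)) ^ s * ((q:ℂ) ^ (k+1) * z ^ (k+1) / (1 - (q:ℂ) ^ (k+1)) ^ s)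
        = (q:ℂ) ^ (k+1) * z ^ (k+1) / (∑ i ∈ Finset.range (k+1), (q:ℂ) ^ i) ^ s := by
    intro q hq k
    have hx1 : (q:ℂ) ≠ 1 := by
      intro h
      have : q = 1 := by exact_mod_cast h
      exact hq.2.ne this
    have h0 : (1 - (q:ℂ)) ≠ 0 := sub_ne_zero.mpr (Ne.symm hx1)
    have hgeom : 1 - (q:ℂ) ^ (k+1)
        = (1 - (q:ℂ)) * ∑ i ∈ Finset.range (k+1), (q:ℂ) ^ i := by
      have := geom_sum_mul (q:ℂ) (k+1)
      linear_combination this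
    have hS : (∑ i ∈ Finset.range (k+1), (q:ℂ) ^ i) ≠ 0 := by
      have hpos : (0:ℝ) < ∑ i ∈ Finset.range (k+1), q ^ i :=
        Finset.sum_pos (fun i _ => pow_pos hq.1 i) ⟨0, by simp⟩
      have : ((∑ i ∈ Finset.range (k+1), q ^ i : ℝ) : ℂ) ≠ 0 := by
        exact_mod_cast hpos.ne'
      simpa using this
    rw [hgeom, mul_pow]
    field_simp
  apply tendsto_tsum_of_dominated_convergence
    (bound := fun k : ℕ => ‖z‖ ^ (k+1))
  · have := summable_geometric_of_lt_one (norm_nonneg z) hz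
    simpa [pow_succ'] using this.mul_left ‖z‖
  · intro k
    have hne : ((k:ℂ) + 1) ≠ 0 := Nat.cast_add_one_ne_zero k
    have hc : ContinuousAt
        (fun q : ℝ => (q:ℂ) ^ (k+1) * z ^ (k+1) / (∑ i ∈ Finset.range (k+1), (q:ℂ) ^ i) ^ s) 1 := by
      apply ContinuousAt.div
      · fun_prop
      · fun_prop
      · simp only [Complex.ofReal_one, one_pow, Finset.sum_const, Finset.card_range, nsmul_eq_mul, mul_one]
        exact pow_ne_zero s (by exact_mod_cast Nat.cast_add_one_ne_zero (R := ℂ) k)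
    have ht := hc.tendsto.mono_left (nhdsWithin_le_nhds (s := Set.Ioo (0:ℝ) 1))
    have heq : ∀ᶠ q : ℝ in 𝓝[Set.Ioo (0:ℝ) 1] 1,
        (q:ℂ) ^ (k+1) * z ^ (k+1) / (∑ i ∈ Finset.range (k+1), (q:ℂ) ^ i) ^ s
          = (1 - (q:ℂ)) ^ s * ((q:ℂ) ^ (k+1) * z ^ (k+1) / (1 - (q:ℂ) ^ (k+1)) ^ s) := by
      filter_upwards [eventually_mem_nhdsWithin] with q hq
      exact (halg q hq k).symm
    have := ht.congr' heq
    simpa using this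
  · filter_upwards [eventually_mem_nhdsWithin] with q hq k
    rw [halg q hq k]
    have hq0 : 0 < q := hq.1
    have hq1 : q < 1 := hq.2
    have hS1 : (1:ℝ) ≤ ∑ i ∈ Finset.range (k+1), q ^ i := by
      have : ∑ i ∈ Finset.range (k+1), q ^ i = 1 + ∑ i ∈ Finset.range k, q ^ (i+1) := by
        rw [Finset.sum_range_succ']; simp [add_comm]
      rw [this]
      nlinarith [Finset.sum_nonneg (fun i (_ : i ∈ Finset.range k) => (pow_pos hq0 (i+1)).le)]
    have hScast : ‖(∑ i ∈ Finset.range (k+1), (q:ℂ) ^ i)‖ = ∑ i ∈ Finset.range (k+1), q ^ i := by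
      have : (∑ i ∈ Finset.range (k+1), (q:ℂ) ^ i) = ((∑ i ∈ Finset.range (k+1), q ^ i : ℝ) : ℂ) := by
        push_cast; ring
      rw [this, Complex.norm_real, Real.norm_eq_abs, abs_of_pos (by linarith)]
    rw [norm_div, norm_mul, norm_pow, norm_pow, norm_pow, hScast, Complex.norm_real,
      Real.norm_eq_abs, abs_of_pos hq0]
    have h1 : q ^ (k+1) ≤ 1 := pow_le_one₀ hq0.le hq1.le
    have h2 : (1:ℝ) ≤ (∑ i ∈ Finset.range (k+1), q ^ i) ^ s := one_le_pow₀ hS1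
    have hz0 : (0:ℝ) ≤ ‖z‖ ^ (k+1) := by positivity
    have h3 : q ^ (k+1) * ‖z‖ ^ (k+1) / (∑ i ∈ Finset.range (k+1), q ^ i) ^ s
        ≤ q ^ (k+1) * ‖z‖ ^ (k+1) := div_le_self (by positivity) h2
    exact h3.trans (mul_le_of_le_one_left hz0 h1)
end

section
/- Let m ≥ 1 and q > 1 real, and let f(z) = Σ_{k=1}^∞ f_k (z-1)^k be a power series (no constant term) convergent on a disc around 1 containing the points q, q^2, ..., q^m. If f(q^ℓ) = 0 for all ℓ ∈ {1, ..., m}, then Σ_{k=1}^∞ f_k Σ_{ℓ=1}^m c_ℓ (q^ℓ - 1)^k = 0 where c_ℓ = 1/((q^ℓ-1)∏_{h=1,h≠ℓ}^m (q^ℓ - q^h)), and consequently f_m = -Σ_{k=m+1}^∞ f_k Σ_{ℓ=1}^m (q^ℓ-1)^{k-1}/∏_{h=1,h≠ℓ}^m (q^ℓ - q^h). -/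
/-!
Put `x_ℓ = q^ℓ - 1`; these are `m` distinct nonzero points in the disc of convergence, and
`c_ℓ x_ℓ = w_ℓ := ∏_{h ≠ ℓ} (x_ℓ - x_h)⁻¹` are their Lagrange nodal weights. Combining the
conditions `Σ_k f_k x_ℓ^k = 0` with weights `c_ℓ` gives `Σ_k f_k Σ_ℓ w_ℓ x_ℓ^{k-1} = 0`.
Since `X^j` is its own interpolant at the `m` nodes for `j < m`, comparing the coefficients of
`X^{m-1}` shows `Σ_ℓ w_ℓ x_ℓ^j = [j = m - 1]`, so the terms with `k ≤ m` collapse to `f_m`.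
-/

open Polynomial Finset

namespace Lagrange

variable {F ι : Type*} [Field F] [DecidableEq ι] {s : Finset ι} {v : ι → F}

theorem coeff_basis_card_sub_one {i : ι} (hi : i ∈ s) :
    (Lagrange.basis s v i).coeff (#s - 1) = nodalWeight s v i := by
  have hdeg : (nodal (s.erase i) v).natDegree = #s - 1 := by
    rw [natDegree_nodal, card_erase_of_mem hi]
  rw [basis_eq_prod_sub_inv_mul_nodal_div hi, ← nodal_erase_eq_nodal_div hi, coeff_C_mul, ← hdeg,
    nodal_monic.coeff_natDegree, mul_one]

theorem sum_pow_mul_nodalWeight (hvs : Set.InjOn v s) {k : ℕ} (hk : k < #s) :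
    ∑ i ∈ s, v i ^ k * nodalWeight s v i = if k = #s - 1 then 1 else 0 := by
  have hdeg : ((X : F[X]) ^ k).degree < #s := by
    rw [degree_X_pow]
    exact_mod_cast hk
  have h := congrArg (coeff · (#s - 1)) (eq_interpolate hvs hdeg)
  simp only [interpolate_apply, finsetSum_coeff, coeff_C_mul, eval_pow, eval_X, coeff_X_pow] at h
  rw [sum_congr rfl fun i hi => by rw [coeff_basis_card_sub_one hi]] at h
  rw [← h]
  exact if_congr eq_comm rfl rfl

theorem sum_range_mul_sum_pow_mul_nodalWeight (hvs : Set.InjOn v s) (hs : s.Nonempty)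
    (a : ℕ → F) :
    ∑ k ∈ range #s, a k * ∑ i ∈ s, v i ^ k * nodalWeight s v i = a (#s - 1) := by
  rw [sum_congr rfl fun k hk => by rw [sum_pow_mul_nodalWeight hvs (mem_range.1 hk)]]
  simp [hs.card_pos]

end Lagrange

theorem summable_mul_pow_of_norm_le {𝕜 : Type*} [NormedField 𝕜] [CompleteSpace 𝕜] {a : ℕ → 𝕜}
    {r : ℝ} (ha : Summable fun k => ‖a k‖ * r ^ k) {x : 𝕜} (hx : ‖x‖ ≤ r) :
    Summable fun k => a k * x ^ k :=
  ha.of_norm_bounded fun k => by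
    rw [norm_mul, norm_pow]
    exact mul_le_mul_of_nonneg_left (pow_le_pow_left₀ (norm_nonneg x) hx k) (norm_nonneg _)

theorem hasSum_mul_sum_pow_succ_mul {R ι : Type*} [CommSemiring R] [TopologicalSpace R]
    [IsTopologicalSemiring R] {a : ℕ → R} {s : Finset ι} {x : ι → R}
    (h : ∀ i ∈ s, HasSum (fun k => a k * x i ^ (k + 1)) 0) (c : ι → R) :
    HasSum (fun k => a k * ∑ i ∈ s, x i ^ (k + 1) * c i) 0 := by
  have hsum := hasSum_sum fun i hi => (h i hi).mul_right (c i)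
  simp only [zero_mul, sum_const_zero] at hsum
  simpa only [mul_sum, mul_assoc] using hsum

namespace Lagrange

variable {F ι : Type*} [Field F] [TopologicalSpace F] [IsTopologicalRing F] [DecidableEq ι]
  {s : Finset ι} {v : ι → F} {a : ℕ → F}

theorem hasSum_mul_sum_pow_mul_nodalWeight (hv : ∀ i ∈ s, v i ≠ 0)
    (h : ∀ i ∈ s, HasSum (fun k => a k * v i ^ (k + 1)) 0) :
    HasSum (fun k => a k * ∑ i ∈ s, v i ^ k * nodalWeight s v i) 0 := by
  convert hasSum_mul_sum_pow_succ_mul h fun i => (v i)⁻¹ * nodalWeight s v i using 3 with k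
  refine sum_congr rfl fun i hi => ?_
  rw [pow_succ]
  field_simp [hv i hi]

theorem eq_neg_tsum_of_hasSum_mul_sum_pow_mul_nodalWeight [T2Space F] (hvs : Set.InjOn v s)
    (hs : s.Nonempty) (h : HasSum (fun k => a k * ∑ i ∈ s, v i ^ k * nodalWeight s v i) 0) :
    a (#s - 1) = -∑' k, a (#s + k) * ∑ i ∈ s, v i ^ (#s + k) * nodalWeight s v i := by
  have htail := ((hasSum_nat_add_iff' #s).2 h).tsum_eq
  rw [sum_range_mul_sum_pow_mul_nodalWeight hvs hs, zero_sub] at htail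
  simp only [add_comm _ #s] at htail
  rw [htail, neg_neg]

end Lagrange

theorem norm_ofReal_pow_sub_one {q : ℝ} (hq : 1 ≤ q) (ℓ : ℕ) :
    ‖(q : ℂ) ^ ℓ - 1‖ = q ^ ℓ - 1 := by
  rw [← Complex.ofReal_pow, ← Complex.ofReal_one, ← Complex.ofReal_sub, Complex.norm_real,
    Real.norm_of_nonneg (sub_nonneg.2 (one_le_pow₀ hq))]

theorem ofReal_pow_sub_one_injective {q : ℝ} (hq : 1 < q) :
    Function.Injective fun ℓ : ℕ => (q : ℂ) ^ ℓ - 1 := fun a b hab =>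
  pow_right_injective₀ (zero_lt_one.trans hq) hq.ne' (by exact_mod_cast sub_left_injective hab)

/-- If `f(z) = Σ_{k≥1} f_k (z-1)^k` converges (absolutely) on a disc around `1` containing
`q, q², …, q^m` and `f(q^ℓ) = 0` for `ℓ = 1,…,m`, then the `c_ℓ`-weighted combination of
these conditions vanishes, and `f_m = -Σ_{k>m} f_k Σ_ℓ (q^ℓ-1)^{k-1}/∏_{h≠ℓ}(q^ℓ-q^h)`. -/
theorem stmt15 (m : ℕ) (hm : 1 ≤ m) (q : ℝ) (hq : 1 < q) (f : ℕ → ℂ)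
    (r : ℝ) (hr : q ^ m - 1 < r)
    (hconv : Summable fun k : ℕ => ‖f k‖ * r ^ k)
    (hzero : ∀ ℓ : ℕ, 1 ≤ ℓ → ℓ ≤ m →
      ∑' k : ℕ, f (k + 1) * ((q : ℂ) ^ ℓ - 1) ^ (k + 1) = 0) :
    (∑' k : ℕ, f (k + 1) * ∑ ℓ ∈ Finset.Icc 1 m,
        ((q : ℂ) ^ ℓ - 1) ^ (k + 1) /
          (((q : ℂ) ^ ℓ - 1) *
            ∏ h ∈ (Finset.Icc 1 m).erase ℓ, ((q : ℂ) ^ ℓ - (q : ℂ) ^ h)) = 0) ∧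
    f m = -∑' k : ℕ, f (m + 1 + k) * ∑ ℓ ∈ Finset.Icc 1 m,
        ((q : ℂ) ^ ℓ - 1) ^ (m + k) /
          ∏ h ∈ (Finset.Icc 1 m).erase ℓ, ((q : ℂ) ^ ℓ - (q : ℂ) ^ h) := by
  set s := Finset.Icc 1 m
  set x : ℕ → ℂ := fun ℓ => (q : ℂ) ^ ℓ - 1
  have hnorm : ∀ ℓ ∈ s, ‖x ℓ‖ ≤ r := fun ℓ hℓ => by
    have := pow_le_pow_right₀ hq.le (mem_Icc.1 hℓ).2
    simp only [x, norm_ofReal_pow_sub_one hq.le]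
    linarith
  have hx0 : ∀ ℓ ∈ s, x ℓ ≠ 0 := fun ℓ hℓ => by
    rw [← norm_pos_iff, norm_ofReal_pow_sub_one hq.le, sub_pos]
    exact one_lt_pow₀ hq (Nat.one_le_iff_ne_zero.1 (mem_Icc.1 hℓ).1)
  have hroots : ∀ ℓ ∈ s, HasSum (fun k => f (k + 1) * x ℓ ^ (k + 1)) 0 := fun ℓ hℓ =>
    ((summable_nat_add_iff 1).2 (summable_mul_pow_of_norm_le hconv (hnorm ℓ hℓ))).hasSum_iff.2
      (hzero ℓ (mem_Icc.1 hℓ).1 (mem_Icc.1 hℓ).2)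
  have hweight : ∀ ℓ, ∏ h ∈ s.erase ℓ, ((q : ℂ) ^ ℓ - (q : ℂ) ^ h)
      = (Lagrange.nodalWeight s x ℓ)⁻¹ := fun ℓ => by
    simp only [Lagrange.nodalWeight, prod_inv_distrib, inv_inv, x, sub_sub_sub_cancel_right]
  refine ⟨?_, ?_⟩
  · simp_rw [div_eq_mul_inv]
    exact (hasSum_mul_sum_pow_succ_mul hroots _).tsum_eq
  · have hcoeff := Lagrange.eq_neg_tsum_of_hasSum_mul_sum_pow_mul_nodalWeight
      (ofReal_pow_sub_one_injective hq).injOn (nonempty_Icc.2 hm)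
      (Lagrange.hasSum_mul_sum_pow_mul_nodalWeight hx0 hroots)
    rw [Nat.card_Icc, Nat.add_sub_cancel, Nat.sub_add_cancel hm] at hcoeff
    simp_rw [hweight, div_inv_eq_mul, add_right_comm m 1]
    exact hcoeff
end
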